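/- arXiv:1911.03625 — 2 statements merged into one kernel-verified Lean document; each statement's English description precedes it below -/
import Mathlib

section
/- Let v₁,…,v_N : [0,T] → ℝ solve v_i'(t) = -(2/α) y(t) v_i(t), and let y solve -y' = 1/2 - (2/α) y², y(T)=0. Then the Lyapunov function L(t) = (1/N) Σᵢ v_i(t)² y(t) satisfies L(t) ≤ L(0) exp(-∫₀ᵗ (2 y(s)/α) ds) for all t ∈ [0, T]. -/
/-!
Along the flow, `L' = -(2y/α) L - (1/(2N)) ∑ᵢ vᵢ²`: the Riccati equation for `y` makes the
`y²`-terms cancel down to exactly `-(2y/α) L`. Hence `L' ≤ -(2y/α) L`, and a Grönwall argument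
with variable rate (the product `L · exp (∫₀ᵗ 2y/α)` has nonpositive derivative) gives the bound.
-/

open Set

theorem le_mul_exp_neg_integral_of_hasDerivAt_le {L L' f : ℝ → ℝ} {a b : ℝ}
    (hf : ContinuousOn f (Icc a b)) (hL : ContinuousOn L (Icc a b))
    (hL' : ∀ t ∈ Ioo a b, HasDerivAt L (L' t) t) (hle : ∀ t ∈ Ioo a b, L' t ≤ -f t * L t) :
    ∀ t ∈ Icc a b, L t ≤ L a * Real.exp (-∫ s in a..t, f s) := by
  intro t ht
  have hab : a ≤ b := ht.1.trans ht.2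
  set F : ℝ → ℝ := fun u => ∫ s in a..u, f s with hF_def
  have hF : ContinuousOn F (Icc a b) := by
    have := intervalIntegral.continuousOn_primitive_interval'
      (hf.intervalIntegrable_of_Icc (μ := MeasureTheory.volume) hab)
      (left_mem_uIcc (a := a) (b := b))
    rwa [uIcc_of_le hab] at this
  have hF' : ∀ u ∈ Ioo a b, HasDerivAt F (f u) u := fun u hu =>
    intervalIntegral.integral_hasDerivAt_right
      ((hf.mono (Icc_subset_Icc le_rfl hu.2.le)).intervalIntegrable_of_Icc hu.1.le)
      ((hf.mono Ioo_subset_Icc_self).stronglyMeasurableAtFilter isOpen_Ioo u hu)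
      (hf.continuousAt (Icc_mem_nhds hu.1 hu.2))
  have hanti : AntitoneOn (fun u => L u * Real.exp (F u)) (Icc a b) := by
    refine antitoneOn_of_hasDerivWithinAt_nonpos (convex_Icc a b) (hL.mul hF.rexp)
      (f' := fun u => (L' u + f u * L u) * Real.exp (F u)) (fun u hu => ?_) (fun u hu => ?_)
    · rw [interior_Icc] at hu ⊢
      exact ((hL' u hu).fun_mul (hF' u hu).exp).hasDerivWithinAt.congr_deriv (by ring)
    · rw [interior_Icc] at hu
      have hrate := hle u hu
      exact mul_nonpos_of_nonpos_of_nonneg (by linarith) (Real.exp_pos _).le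
  have key := hanti (left_mem_Icc.mpr hab) ht ht.1
  simp only [hF_def, intervalIntegral.integral_same, Real.exp_zero, mul_one] at key
  rwa [Real.exp_neg, ← div_eq_mul_inv, le_div_iff₀ (Real.exp_pos _)]

theorem hasDerivAt_mul_sum_sq_mul {ι : Type*} [Fintype ι] (c k : ℝ) {y : ℝ → ℝ}
    {v : ι → ℝ → ℝ} {t : ℝ} (hy : HasDerivAt y (-(1/2) + c * y t ^ 2) t)
    (hv : ∀ i, HasDerivAt (v i) (-c * y t * v i t) t) :
    HasDerivAt (fun s => k * ∑ i, v i s ^ 2 * y s)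
      (-(c * y t) * (k * ∑ i, v i t ^ 2 * y t) - k / 2 * ∑ i, v i t ^ 2) t := by
  have hsum := HasDerivAt.fun_sum (u := Finset.univ) fun i _ => ((hv i).fun_pow 2).fun_mul hy
  refine (hsum.const_mul k).congr_deriv ?_
  simp only [Finset.mul_sum, ← Finset.sum_sub_distrib]
  refine Finset.sum_congr rfl fun i _ => ?_
  ring

theorem stmt_6_general (N : ℕ) (α T : ℝ)
    (y : ℝ → ℝ)
    (hy : ∀ t ∈ Icc (0:ℝ) T, HasDerivAt y (-(1/2) + (2/α) * (y t)^2) t)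
    (v : Fin N → ℝ → ℝ)
    (hv : ∀ i, ∀ t ∈ Icc (0:ℝ) T, HasDerivAt (v i) (-(2/α) * y t * v i t) t) :
    ∀ t ∈ Icc (0:ℝ) T,
      (1/(N:ℝ)) * ∑ i, (v i t)^2 * y t ≤
        ((1/(N:ℝ)) * ∑ i, (v i 0)^2 * y 0) *
          Real.exp (-∫ s in (0:ℝ)..t, 2 * y s / α) := by
  have hL : ∀ t ∈ Icc (0:ℝ) T, HasDerivAt (fun s => (1/(N:ℝ)) * ∑ i, v i s ^ 2 * y s)
      (-(2/α * y t) * ((1/(N:ℝ)) * ∑ i, v i t ^ 2 * y t) - 1/(N:ℝ) / 2 * ∑ i, v i t ^ 2) t :=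
    fun t ht => hasDerivAt_mul_sum_sq_mul _ _ (hy t ht) fun i => hv i t ht
  have hyc : ContinuousOn y (Icc 0 T) := fun t ht => (hy t ht).continuousAt.continuousWithinAt
  refine le_mul_exp_neg_integral_of_hasDerivAt_le ((continuousOn_const.mul hyc).div_const α)
    (fun t ht => (hL t ht).continuousAt.continuousWithinAt)
    (fun t ht => hL t (Ioo_subset_Icc_self ht)) fun t _ => ?_
  have hdissipation : 0 ≤ 1/(N:ℝ) / 2 * ∑ i, v i t ^ 2 := by positivity
  have hrate : 2/α * y t = 2 * y t / α := by ring
  rw [hrate]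
  linarith

/-- Decay of the Lyapunov function `L t = (1/N) ∑ i, v i t ^ 2 * y t` for the controlled
particle system `vᵢ' = -(2/α) y vᵢ`, with `y` solving the backward Riccati equation. -/
theorem stmt_6 (N : ℕ) (hN : 1 ≤ N) (α T : ℝ) (hα : 0 < α) (hT : 0 < T)
    (y : ℝ → ℝ)
    (hy : ∀ t ∈ Icc (0:ℝ) T, HasDerivAt y (-(1/2) + (2/α) * (y t)^2) t)
    (hyT : y T = 0)
    (v : Fin N → ℝ → ℝ)
    (hv : ∀ i, ∀ t ∈ Icc (0:ℝ) T, HasDerivAt (v i) (-(2/α) * y t * v i t) t) :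
    ∀ t ∈ Icc (0:ℝ) T,
      (1/(N:ℝ)) * ∑ i, (v i t)^2 * y t ≤
        ((1/(N:ℝ)) * ∑ i, (v i 0)^2 * y 0) *
          Real.exp (-∫ s in (0:ℝ)..t, 2 * y s / α) :=
  stmt_6_general N α T y hy v hv
end

section
/- Let ρ ≥ 0 and u be C¹ solutions of ∂_t ρ + ∂_x(ρu) = 0 and ∂_t u + u ∂_x u + (2/α) y(t) u = 0 on [0,T] × ℝ, decaying as |x| → ∞, with ∫ ρu² dx finite, and let y ≥ 0 solve the backward Riccati equation. Then 𝓛(t) := y(t) ∫ ρ(t,x) u(t,x)² dx satisfies 𝓛(t) ≤ 𝓛(0) exp(-∫₀ᵗ (2 y(s)/α) ds) for t ∈ [0,T]. -/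
/-!
Write `b = 2y/α` and `B(t) = ∫₀ᵗ b`. Along a characteristic `ξ' = u(s, ξ)` the damped Burgers
equation reads `(u ∘ ξ)' = -b · (u ∘ ξ)`, so `u` stays bounded along it and characteristics through
any point exist on all of `[0, t]`. The continuity and Burgers equations combine into the energy
balance `∂ₜ(ρu²) + ∂ₓ(ρu³) = -2b ρu²`; on a window bounded by two characteristics the flux `ρu³`
through the ends is exactly the transport of the ends, so `∫_{ξ₁}^{ξ₂} ρu²` decays like
`exp(-2B)`. Exhausting `ℝ` by such windows gives `∫ ρ(t) u(t)² ≤ e^{-2B(t)} ∫ ρ(0) u(0)²`, and the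
Riccati equation gives `y' ≤ b y`, hence `y(t) ≤ e^{B(t)} y(0)`; multiplying the two bounds gives
the claim.
-/

open Set MeasureTheory Filter Topology NNReal

section PartialDerivatives

variable {f : ℝ → ℝ → ℝ}

theorem hasDerivAt_fst_of_contDiff (hf : ContDiff ℝ 1 fun p : ℝ × ℝ => f p.1 p.2) (t x : ℝ) :
    HasDerivAt (fun s => f s x) (fderiv ℝ (fun p : ℝ × ℝ => f p.1 p.2) (t, x) (1, 0)) t :=
  ((hf.differentiable one_ne_zero) (t, x)).hasFDerivAt.comp_hasDerivAt (x := t)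
    (f := fun s => (s, x)) ((hasDerivAt_id' t).prodMk (hasDerivAt_const t x))

theorem hasDerivAt_snd_of_contDiff (hf : ContDiff ℝ 1 fun p : ℝ × ℝ => f p.1 p.2) (t x : ℝ) :
    HasDerivAt (fun y => f t y) (fderiv ℝ (fun p : ℝ × ℝ => f p.1 p.2) (t, x) (0, 1)) x :=
  ((hf.differentiable one_ne_zero) (t, x)).hasFDerivAt.comp_hasDerivAt (x := x)
    (f := fun y => (t, y)) ((hasDerivAt_const x t).prodMk (hasDerivAt_id' x))

theorem continuous_deriv_fst_of_contDiff (hf : ContDiff ℝ 1 fun p : ℝ × ℝ => f p.1 p.2) :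
    Continuous fun p : ℝ × ℝ => deriv (fun s => f s p.2) p.1 := by
  simp_rw [fun p : ℝ × ℝ => (hasDerivAt_fst_of_contDiff hf p.1 p.2).deriv]
  exact (hf.continuous_fderiv one_ne_zero).clm_apply continuous_const

theorem hasDerivAt_comp_graph_of_contDiff (hf : ContDiff ℝ 1 fun p : ℝ × ℝ => f p.1 p.2)
    {ξ : ℝ → ℝ} {v t : ℝ} (hξ : HasDerivAt ξ v t) :
    HasDerivAt (fun s => f s (ξ s))
      (deriv (fun s => f s (ξ t)) t + v * deriv (fun y => f t y) (ξ t)) t := by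
  refine (((hf.differentiable one_ne_zero) (t, ξ t)).hasFDerivAt.comp_hasDerivAt (x := t)
    (f := fun s => (s, ξ s)) ((hasDerivAt_id' t).prodMk hξ)).congr_deriv ?_
  rw [(hasDerivAt_fst_of_contDiff hf t (ξ t)).deriv, (hasDerivAt_snd_of_contDiff hf t (ξ t)).deriv,
    ← smul_eq_mul, ← map_smul, ← map_add]
  simp

end PartialDerivatives

section ParametricIntegral

variable {F : ℝ → ℝ → ℝ}

theorem hasDerivAt_intervalIntegral_of_contDiff
    (hF : ContDiff ℝ 1 fun p : ℝ × ℝ => F p.1 p.2) (a b t : ℝ) :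
    HasDerivAt (fun s => ∫ y in a..b, F s y) (∫ y in a..b, deriv (fun s => F s y) t) t := by
  have hF' := continuous_deriv_fst_of_contDiff hF
  obtain ⟨C, hC⟩ := (isCompact_closedBall t 1 |>.prod isCompact_uIcc).exists_bound_of_continuousOn
    hF'.continuousOn
  refine (intervalIntegral.hasDerivAt_integral_of_dominated_loc_of_deriv_le (μ := volume)
    (F := fun s y => F s y) (F' := fun s y => deriv (fun s => F s y) s) (bound := fun _ => C)
    (Metric.ball_mem_nhds t one_pos) (Eventually.of_forall fun s => ?_) ?_ ?_ ?_
    intervalIntegrable_const ?_).2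
  · exact (hF.continuous.comp (continuous_const.prodMk continuous_id)).aestronglyMeasurable
  · exact (hF.continuous.comp (continuous_const.prodMk continuous_id)).intervalIntegrable _ _
  · exact (hF'.comp (continuous_const.prodMk continuous_id)).aestronglyMeasurable
  · exact ae_of_all _ fun y hy s hs =>
      hC (s, y) ⟨Metric.ball_subset_closedBall hs, uIoc_subset_uIcc hy⟩
  · exact ae_of_all _ fun y _ s _ =>
      (hasDerivAt_fst_of_contDiff hF s y).differentiableAt.hasDerivAt

theorem hasStrictFDerivAt_parametric_primitive
    (hF : ContDiff ℝ 1 fun p : ℝ × ℝ => F p.1 p.2) (p : ℝ × ℝ) :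
    HasStrictFDerivAt (fun q : ℝ × ℝ => ∫ y in 0..q.2, F q.1 y)
      (((1 : ℝ →L[ℝ] ℝ).smulRight (∫ y in 0..p.2, deriv (fun s => F s y) p.1)).coprod
        ((1 : ℝ →L[ℝ] ℝ).smulRight (F p.1 p.2))) p := by
  refine hasStrictFDerivAt_uncurry_coprod (f := fun s x => ∫ y in 0..x, F s y)
    (f₁ := fun s x => (1 : ℝ →L[ℝ] ℝ).smulRight (∫ y in 0..x, deriv (fun s => F s y) s))
    (f₂ := fun s x => (1 : ℝ →L[ℝ] ℝ).smulRight (F s x))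
    (Eventually.of_forall fun q => ?_) (Eventually.of_forall fun q => ?_) ?_ ?_
  · exact (hasDerivAt_intervalIntegral_of_contDiff hF 0 q.2 q.1).hasFDerivAt
  · exact ((hF.continuous.comp (continuous_const.prodMk continuous_id)).integral_hasStrictDerivAt
      0 q.2).hasDerivAt.hasFDerivAt
  · exact ((ContinuousLinearMap.smulRightL ℝ ℝ ℝ 1).continuous.comp
      (intervalIntegral.continuous_parametric_primitive_of_continuous (μ := volume)
        (f := fun s y => deriv (fun s => F s y) s)
        (continuous_deriv_fst_of_contDiff hF))).continuousAt
  · exact ((ContinuousLinearMap.smulRightL ℝ ℝ ℝ 1).continuous.comp hF.continuous).continuousAt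

theorem continuousOn_parametric_intervalIntegral (hF : Continuous fun p : ℝ × ℝ => F p.1 p.2)
    {a b : ℝ → ℝ} {S : Set ℝ} (ha : ContinuousOn a S) (hb : ContinuousOn b S) :
    ContinuousOn (fun s => ∫ y in a s..b s, F s y) S := by
  have hP := intervalIntegral.continuous_parametric_primitive_of_continuous (μ := volume)
    (f := F) (a₀ := 0) hF
  have hslice : ∀ s, Continuous (F s) := fun s => hF.comp (continuous_const.prodMk continuous_id)
  refine ((hP.comp_continuousOn (continuousOn_id.prodMk hb)).sub
    (hP.comp_continuousOn (continuousOn_id.prodMk ha))).congr fun s _ => ?_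
  exact (intervalIntegral.integral_interval_sub_left ((hslice s).intervalIntegrable _ _)
    ((hslice s).intervalIntegrable _ _)).symm

theorem hasDerivAt_parametric_intervalIntegral (hF : ContDiff ℝ 1 fun p : ℝ × ℝ => F p.1 p.2)
    {a b : ℝ → ℝ} {a' b' t : ℝ} (ha : HasDerivAt a a' t) (hb : HasDerivAt b b' t) :
    HasDerivAt (fun s => ∫ y in a s..b s, F s y)
      ((∫ y in a t..b t, deriv (fun s => F s y) t) + b' * F t (b t) - a' * F t (a t)) t := by
  have hslice : ∀ s, Continuous (F s) := fun s =>
    hF.continuous.comp (continuous_const.prodMk continuous_id)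
  have hslice' : Continuous fun y => deriv (fun s => F s y) t :=
    (continuous_deriv_fst_of_contDiff hF).comp (continuous_const.prodMk continuous_id)
  have hprim : ∀ {c : ℝ → ℝ} {c' : ℝ}, HasDerivAt c c' t →
      HasDerivAt (fun s => ∫ y in 0..c s, F s y)
        ((∫ y in 0..c t, deriv (fun s => F s y) t) + c' * F t (c t)) t := fun {c c'} hc => by
    refine ((hasStrictFDerivAt_parametric_primitive hF (t, c t)).hasFDerivAt.comp_hasDerivAt
      (x := t) (f := fun s => (s, c s)) ((hasDerivAt_id' t).prodMk hc)).congr_deriv ?_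
    simp
  refine (((hprim hb).sub (hprim ha)).congr_of_eventuallyEq
    (Eventually.of_forall fun s => ?_)).congr_deriv ?_
  · exact (intervalIntegral.integral_interval_sub_left ((hslice s).intervalIntegrable _ _)
      ((hslice s).intervalIntegrable _ _)).symm
  · rw [← intervalIntegral.integral_interval_sub_left (hslice'.intervalIntegrable 0 (b t))
      (hslice'.intervalIntegrable 0 (a t))]
    ring

/-- Reynolds transport: the flux `F u` through the ends of the window cancels against the motion
of the ends. -/
theorem hasDerivAt_parametric_intervalIntegral_of_balance {u : ℝ → ℝ → ℝ}
    (hF : ContDiff ℝ 1 fun p : ℝ × ℝ => F p.1 p.2) {t c : ℝ} (hu : Differentiable ℝ fun y => u t y)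
    (hbal : ∀ x, deriv (fun s => F s x) t + deriv (fun y => F t y * u t y) x = c * F t x)
    {ξ₁ ξ₂ : ℝ → ℝ} (h₁ : HasDerivAt ξ₁ (u t (ξ₁ t)) t) (h₂ : HasDerivAt ξ₂ (u t (ξ₂ t)) t) :
    HasDerivAt (fun s => ∫ y in ξ₁ s..ξ₂ s, F s y) (c * ∫ y in ξ₁ t..ξ₂ t, F t y) t := by
  have hslice : Continuous fun y => F t y :=
    hF.continuous.comp (continuous_const.prodMk continuous_id)
  have hslice' : Continuous fun y => deriv (fun s => F s y) t :=
    (continuous_deriv_fst_of_contDiff hF).comp (continuous_const.prodMk continuous_id)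
  have hflux : deriv (fun y => F t y * u t y) = fun y => c * F t y - deriv (fun s => F s y) t :=
    funext fun y => eq_sub_of_add_eq' (hbal y)
  have hends : ∫ y in ξ₁ t..ξ₂ t, deriv (fun y => F t y * u t y) y
      = F t (ξ₂ t) * u t (ξ₂ t) - F t (ξ₁ t) * u t (ξ₁ t) :=
    intervalIntegral.integral_deriv_eq_sub
      (fun y _ => (hasDerivAt_snd_of_contDiff hF t y).differentiableAt.mul (hu y))
      (hflux ▸ ((continuous_const.mul hslice).sub hslice').intervalIntegrable _ _)
  simp only [hflux] at hends
  rw [intervalIntegral.integral_sub ((hslice.intervalIntegrable _ _).const_mul c)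
    (hslice'.intervalIntegrable _ _), intervalIntegral.integral_const_mul] at hends
  refine (hasDerivAt_parametric_intervalIntegral hF h₁ h₂).congr_deriv ?_
  linarith

end ParametricIntegral

section LinearODE

variable {f a : ℝ → ℝ} {t₀ t₁ : ℝ}

theorem hasDerivAt_intervalIntegral_right_of_continuousOn (ha : ContinuousOn a (Icc t₀ t₁))
    {s : ℝ} (hs : s ∈ Ioo t₀ t₁) : HasDerivAt (fun s => ∫ r in t₀..s, a r) (a s) s :=
  intervalIntegral.integral_hasDerivAt_right
    ((ha.mono (Icc_subset_Icc_right hs.2.le)).intervalIntegrable_of_Icc hs.1.le)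
    (ContinuousOn.stronglyMeasurableAtFilter isOpen_Ioo (ha.mono Ioo_subset_Icc_self) s hs)
    (ha.continuousAt (Icc_mem_nhds hs.1 hs.2))

theorem le_mul_exp_integral_of_hasDerivAt {f' : ℝ → ℝ} (h : t₀ ≤ t₁)
    (ha : ContinuousOn a (Icc t₀ t₁)) (hf : ContinuousOn f (Icc t₀ t₁))
    (hf' : ∀ s ∈ Ioo t₀ t₁, HasDerivAt f (f' s) s) (hle : ∀ s ∈ Ioo t₀ t₁, f' s ≤ a s * f s) :
    f t₁ ≤ f t₀ * Real.exp (∫ r in t₀..t₁, a r) := by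
  set A : ℝ → ℝ := fun s => ∫ r in t₀..s, a r
  have hA : ContinuousOn A (Icc t₀ t₁) := by
    simpa [uIcc_of_le h] using intervalIntegral.continuousOn_primitive_interval
      (ha.integrableOn_Icc.mono_set (uIcc_of_le h).subset)
  have hanti : AntitoneOn (fun s => f s * Real.exp (-A s)) (Icc t₀ t₁) := by
    refine antitoneOn_of_hasDerivWithinAt_nonpos (convex_Icc t₀ t₁)
      (hf.mul hA.neg.rexp) (fun s hs => ?_) (fun s hs => ?_)
      (f' := fun s => (f' s - a s * f s) * Real.exp (-A s))
    · rw [interior_Icc] at hs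
      refine (((hf' s hs).mul
        (hasDerivAt_intervalIntegral_right_of_continuousOn ha hs).neg.exp).congr_deriv
        ?_).hasDerivWithinAt
      simp only [Pi.neg_apply, A]
      ring
    · rw [interior_Icc] at hs
      exact mul_nonpos_of_nonpos_of_nonneg (sub_nonpos.2 (hle s hs)) (Real.exp_pos _).le
  have := hanti (left_mem_Icc.2 h) (right_mem_Icc.2 h) h
  simp only [A, intervalIntegral.integral_same, neg_zero, Real.exp_zero, mul_one] at this
  calc f t₁ = f t₁ * Real.exp (-A t₁) * Real.exp (A t₁) := by
        rw [mul_assoc, ← Real.exp_add, neg_add_cancel, Real.exp_zero, mul_one]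
    _ ≤ f t₀ * Real.exp (A t₁) := by gcongr

theorem eq_mul_exp_integral_of_hasDerivAt (h : t₀ ≤ t₁)
    (ha : ContinuousOn a (Icc t₀ t₁)) (hf : ContinuousOn f (Icc t₀ t₁))
    (hf' : ∀ s ∈ Ioo t₀ t₁, HasDerivAt f (a s * f s) s) :
    f t₁ = f t₀ * Real.exp (∫ r in t₀..t₁, a r) := by
  refine le_antisymm (le_mul_exp_integral_of_hasDerivAt h ha hf hf' fun s _ => le_rfl) ?_
  have := le_mul_exp_integral_of_hasDerivAt (f := fun s => -f s) h ha hf.neg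
    (fun s hs => (hf' s hs).neg) fun s _ => le_of_eq (by ring)
  linarith

/-- `g` is only known to solve `g' = a g` where `|g| < M`, but the solution through `g t₁` stays
below `M`; continuous induction backwards from `t₁` shows that `g` is that solution. -/
theorem eq_mul_exp_integral_of_hasDerivAt_of_abs_lt {g : ℝ → ℝ} {M : ℝ} (h : t₀ ≤ t₁)
    (ha : ContinuousOn a (Icc t₀ t₁)) (hg : ContinuousOn g (Icc t₀ t₁))
    (hM : ∀ s ∈ Icc t₀ t₁, |g t₁ * Real.exp (-∫ r in s..t₁, a r)| < M)
    (hg' : ∀ s ∈ Ioo t₀ t₁, |g s| < M → HasDerivAt g (a s * g s) s) :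
    ∀ s ∈ Icc t₀ t₁, g s = g t₁ * Real.exp (-∫ r in s..t₁, a r) := by
  set P : ℝ → ℝ := fun s => g t₁ * Real.exp (-∫ r in s..t₁, a r)
  have hP : ContinuousOn P (Icc t₀ t₁) := by
    have := intervalIntegral.continuousOn_primitive_interval_left (μ := volume)
      (ha.integrableOn_Icc.mono_set (uIcc_of_le h).subset)
    rw [uIcc_of_le h] at this
    exact continuousOn_const.mul this.neg.rexp
  intro s₀ hs₀
  have hclosed : IsClosed ({s | g s = P s} ∩ Icc s₀ t₁) := by
    have := ((hg.sub hP).mono (Icc_subset_Icc_left hs₀.1)).preimage_isClosed_of_isClosed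
      isClosed_Icc (isClosed_singleton (x := (0 : ℝ)))
    convert this using 1
    ext s
    simp [sub_eq_zero, and_comm]
  refine hclosed.mem_of_ge_of_forall_exists_lt (by simp [P]) hs₀.2 ?_
  rintro x ⟨hxP, hx⟩
  replace hxP : g x = P x := hxP
  have hxt : x ∈ Icc t₀ t₁ := ⟨hs₀.1.trans hx.1.le, hx.2⟩
  have hnear : ∀ᶠ y in 𝓝[≤] x, |g y| < M := by
    rw [← nhdsWithin_Icc_eq_nhdsLE (hs₀.1.trans_lt hx.1)]
    exact ((hg x hxt).mono (Icc_subset_Icc_right hx.2)).abs.eventually_lt_const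
      (by simpa only [hxP] using hM x hxt)
  obtain ⟨l, hlx, hl⟩ := mem_nhdsLE_iff_exists_Icc_subset.1 hnear
  set y := max s₀ l
  have hyx : y < x := max_lt hx.1 hlx
  have hsub : Icc y x ⊆ Icc t₀ t₁ := Icc_subset_Icc (hs₀.1.trans (le_max_left _ _)) hx.2
  refine ⟨y, ?_, le_max_left _ _, hyx⟩
  have hflow := eq_mul_exp_integral_of_hasDerivAt hyx.le (ha.mono hsub) (hg.mono hsub)
    fun s hs => hg' s ⟨(hsub (left_mem_Icc.2 hyx.le)).1.trans_lt hs.1, hs.2.trans_le hx.2⟩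
      (hl ⟨(le_max_right _ _).trans hs.1.le, hs.2.le⟩)
  have hint : ∀ b c, b ∈ Icc t₀ t₁ → c ∈ Icc t₀ t₁ → IntervalIntegrable a volume b c :=
    fun b c hb hc => (ha.mono (uIcc_subset_Icc hb hc)).intervalIntegrable
  rw [hxP] at hflow
  calc g y = P x * Real.exp (-∫ r in y..x, a r) := by
        rw [hflow, mul_assoc, ← Real.exp_add, add_neg_cancel, Real.exp_zero, mul_one]
    _ = P y := by
        simp only [P]
        rw [← intervalIntegral.integral_add_adjacent_intervals
          (hint y x (hsub (left_mem_Icc.2 hyx.le)) hxt) (hint x t₁ hxt (right_mem_Icc.2 h)),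
          neg_add, Real.exp_add]
        ring

end LinearODE

section Characteristics

variable {u : ℝ → ℝ → ℝ}

theorem exists_forall_hasDerivWithinAt_clamp (hu : ContDiff ℝ 1 fun p : ℝ × ℝ => u p.1 p.2)
    (M : ℝ≥0) {t₀ t₁ τ : ℝ} (hτ : τ ∈ Icc t₀ t₁) (c : ℝ) :
    ∃ ξ : ℝ → ℝ, ξ τ = c ∧ ∀ s ∈ Icc t₀ t₁,
      HasDerivWithinAt ξ (max (-M) (min M (u s (ξ s)))) (Icc t₀ t₁) s := by
  set v : ℝ → ℝ → ℝ := fun s x => max (-M) (min M (u s x))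
  have hv : LocallyLipschitz fun p : ℝ × ℝ => v p.1 p.2 :=
    (hu.locallyLipschitz.const_min M).const_max (-M)
  set R : ℝ≥0 := M * ⟨t₁ - t₀, sub_nonneg.2 (hτ.1.trans hτ.2)⟩
  obtain ⟨K, hK⟩ := hv.locallyLipschitzOn.exists_lipschitzOnWith_of_compact
    (isCompact_Icc.prod (isCompact_closedBall c R))
  have hpl : IsPicardLindelof v (tmin := t₀) (tmax := t₁) ⟨τ, hτ⟩ c R 0 M K :=
    { lipschitzOnWith := fun s hs => by
        have := hK.comp (LipschitzWith.prodMk_left s).lipschitzOnWith fun x hx => ⟨hs, hx⟩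
        rwa [mul_one] at this
      continuousOn := fun x _ =>
        (continuous_const.max (continuous_const.min
          (hu.continuous.comp (continuous_id.prodMk continuous_const)))).continuousOn
      norm_le := fun s _ x _ => by
        rw [Real.norm_eq_abs, abs_le]
        exact ⟨le_max_left _ _, max_le (by simp) (min_le_left _ _)⟩
      mul_max_le := by
        show (M : ℝ) * _ ≤ M * (t₁ - t₀) - 0
        rw [sub_zero]
        exact mul_le_mul_of_nonneg_left (max_le (by linarith [hτ.1]) (by linarith [hτ.2])) M.2 }
  exact hpl.exists_eq_forall_mem_Icc_hasDerivWithinAt₀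

/-- Solve the characteristic equation with `u` truncated at a level `M`; along the solution `u`
solves `g' = -b g`, which keeps it below `M`, so the truncation is never active. -/
theorem exists_characteristic (hu : ContDiff ℝ 1 fun p : ℝ × ℝ => u p.1 p.2)
    {b : ℝ → ℝ} {t₀ t₁ : ℝ} (h : t₀ ≤ t₁) (hb : ContinuousOn b (Icc t₀ t₁))
    (hburgers : ∀ s ∈ Ioo t₀ t₁, ∀ x,
      deriv (fun s => u s x) s + u s x * deriv (fun y => u s y) x + b s * u s x = 0) (c : ℝ) :
    ∃ ξ : ℝ → ℝ, ξ t₁ = c ∧ ∀ s ∈ Icc t₀ t₁, HasDerivWithinAt ξ (u s (ξ s)) (Icc t₀ t₁) s := by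
  obtain ⟨C, hC⟩ := isCompact_Icc.exists_bound_of_continuousOn hb
  set M : ℝ≥0 := ⟨|u t₁ c| * Real.exp (C * (t₁ - t₀)) + 1, by positivity⟩
  have hclamp : ∀ w : ℝ, |w| < M → max (-(M : ℝ)) (min (M : ℝ) w) = w := fun w hw => by
    rw [min_eq_right (abs_lt.1 hw).2.le, max_eq_right (abs_lt.1 hw).1.le]
  obtain ⟨ξ, hξc, hξ⟩ := exists_forall_hasDerivWithinAt_clamp hu M (right_mem_Icc.2 h) c
  have hg : ContinuousOn (fun s => u s (ξ s)) (Icc t₀ t₁) :=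
    hu.continuous.comp_continuousOn
      (continuousOn_id.prodMk fun s hs => (hξ s hs).continuousWithinAt)
  have hM : ∀ s ∈ Icc t₀ t₁, |u t₁ (ξ t₁) * Real.exp (-∫ r in s..t₁, -b r)| < M := by
    intro s hs
    have hB : ∫ r in s..t₁, b r ≤ C * (t₁ - t₀) := by
      refine (le_abs_self _).trans ((intervalIntegral.norm_integral_le_of_norm_le_const
        fun r hr => hC r (uIoc_subset_uIcc.trans (uIcc_subset_Icc hs (right_mem_Icc.2 h)) hr)).trans ?_)
      rw [abs_of_nonneg (sub_nonneg.2 hs.2)]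
      exact mul_le_mul_of_nonneg_left (by linarith [hs.1]) ((norm_nonneg _).trans (hC s hs))
    rw [intervalIntegral.integral_neg, neg_neg, abs_mul, Real.abs_exp, hξc]
    exact lt_of_le_of_lt (by gcongr) (lt_add_one _)
  have hflow := eq_mul_exp_integral_of_hasDerivAt_of_abs_lt h hb.neg hg hM fun s hs hgs => by
    have hξs := (hξ s (Ioo_subset_Icc_self hs)).hasDerivAt (Icc_mem_nhds hs.1 hs.2)
    rw [hclamp _ hgs] at hξs
    refine (hasDerivAt_comp_graph_of_contDiff hu hξs).congr_deriv ?_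
    rw [Pi.neg_apply]
    linear_combination hburgers s hs (ξ s)
  refine ⟨ξ, hξc, fun s hs => ?_⟩
  have := hξ s hs
  rwa [hclamp _ (hflow s hs ▸ hM s hs)] at this

end Characteristics

theorem intervalIntegral_le_integral_of_nonneg {f : ℝ → ℝ} (hf : Integrable f)
    (hpos : ∀ x, 0 ≤ f x) (a b : ℝ) : ∫ x in a..b, f x ≤ ∫ x, f x := by
  rcases le_total a b with h | h
  · rw [intervalIntegral.integral_of_le h]
    exact setIntegral_le_integral hf (ae_of_all _ hpos)
  · rw [intervalIntegral.integral_of_ge h, neg_le]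
    exact (neg_nonpos.2 (integral_nonneg hpos)).trans
      (setIntegral_nonneg measurableSet_Ioc fun x _ => hpos x)

section Energy

variable {ρ u : ℝ → ℝ → ℝ}

theorem energy_balance (hρ : ContDiff ℝ 1 fun p : ℝ × ℝ => ρ p.1 p.2)
    (hu : ContDiff ℝ 1 fun p : ℝ × ℝ => u p.1 p.2) {b t x : ℝ}
    (hmass : deriv (fun s => ρ s x) t + deriv (fun y => ρ t y * u t y) x = 0)
    (hburgers : deriv (fun s => u s x) t + u t x * deriv (fun y => u t y) x + b * u t x = 0) :
    deriv (fun s => ρ s x * u s x ^ 2) t + deriv (fun y => ρ t y * u t y ^ 2 * u t y) x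
      = -2 * b * (ρ t x * u t x ^ 2) := by
  have hρx := (hasDerivAt_snd_of_contDiff hρ t x).differentiableAt
  have hux := (hasDerivAt_snd_of_contDiff hu t x).differentiableAt
  have ht := (hasDerivAt_fst_of_contDiff hρ t x).differentiableAt.hasDerivAt.fun_mul
    ((hasDerivAt_fst_of_contDiff hu t x).differentiableAt.hasDerivAt.fun_pow 2)
  have hx := (hρx.fun_mul hux).hasDerivAt.fun_mul (hux.hasDerivAt.fun_pow 2)
  have hflux : (fun y => ρ t y * u t y ^ 2 * u t y) = fun y => ρ t y * u t y * u t y ^ 2 :=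
    funext fun y => by ring
  rw [ht.deriv, hflux, hx.deriv]
  linear_combination u t x ^ 2 * hmass + 2 * ρ t x * u t x * hburgers

theorem exists_integral_energy_eq (hρ : ContDiff ℝ 1 fun p : ℝ × ℝ => ρ p.1 p.2)
    (hu : ContDiff ℝ 1 fun p : ℝ × ℝ => u p.1 p.2) {b : ℝ → ℝ} {t₀ t₁ : ℝ} (h : t₀ ≤ t₁)
    (hb : ContinuousOn b (Icc t₀ t₁))
    (hmass : ∀ s ∈ Ioo t₀ t₁, ∀ x,
      deriv (fun s => ρ s x) s + deriv (fun y => ρ s y * u s y) x = 0)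
    (hburgers : ∀ s ∈ Ioo t₀ t₁, ∀ x,
      deriv (fun s => u s x) s + u s x * deriv (fun y => u s y) x + b s * u s x = 0)
    (c d : ℝ) :
    ∃ a₁ a₂ : ℝ, ∫ x in c..d, ρ t₁ x * u t₁ x ^ 2
      = (∫ x in a₁..a₂, ρ t₀ x * u t₀ x ^ 2) * Real.exp (-2 * ∫ s in t₀..t₁, b s) := by
  obtain ⟨ξ₁, hξ₁t, hξ₁⟩ := exists_characteristic hu h hb hburgers c
  obtain ⟨ξ₂, hξ₂t, hξ₂⟩ := exists_characteristic hu h hb hburgers d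
  have hE : ContDiff ℝ 1 fun p : ℝ × ℝ => ρ p.1 p.2 * u p.1 p.2 ^ 2 := hρ.mul (hu.pow 2)
  refine ⟨ξ₁ t₀, ξ₂ t₀, ?_⟩
  rw [← hξ₁t, ← hξ₂t, ← intervalIntegral.integral_const_mul]
  refine eq_mul_exp_integral_of_hasDerivAt (f := fun s => ∫ x in ξ₁ s..ξ₂ s, ρ s x * u s x ^ 2) h
    (continuousOn_const.mul hb) (continuousOn_parametric_intervalIntegral hE.continuous
      (fun s hs => (hξ₁ s hs).continuousWithinAt) (fun s hs => (hξ₂ s hs).continuousWithinAt))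
    fun s hs => ?_
  exact hasDerivAt_parametric_intervalIntegral_of_balance hE
    (fun y => (hasDerivAt_snd_of_contDiff hu s y).differentiableAt)
    (fun x => energy_balance hρ hu (hmass s hs x) (hburgers s hs x))
    ((hξ₁ s (Ioo_subset_Icc_self hs)).hasDerivAt (Icc_mem_nhds hs.1 hs.2))
    ((hξ₂ s (Ioo_subset_Icc_self hs)).hasDerivAt (Icc_mem_nhds hs.1 hs.2))

theorem integral_energy_le (hρ : ContDiff ℝ 1 fun p : ℝ × ℝ => ρ p.1 p.2)
    (hu : ContDiff ℝ 1 fun p : ℝ × ℝ => u p.1 p.2) {b : ℝ → ℝ} {t₀ t₁ : ℝ} (h : t₀ ≤ t₁)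
    (hb : ContinuousOn b (Icc t₀ t₁))
    (hmass : ∀ s ∈ Ioo t₀ t₁, ∀ x,
      deriv (fun s => ρ s x) s + deriv (fun y => ρ s y * u s y) x = 0)
    (hburgers : ∀ s ∈ Ioo t₀ t₁, ∀ x,
      deriv (fun s => u s x) s + u s x * deriv (fun y => u s y) x + b s * u s x = 0)
    (hρ₀ : ∀ x, 0 ≤ ρ t₀ x) (hint₀ : Integrable fun x => ρ t₀ x * u t₀ x ^ 2)
    (hint₁ : Integrable fun x => ρ t₁ x * u t₁ x ^ 2) :
    ∫ x, ρ t₁ x * u t₁ x ^ 2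
      ≤ (∫ x, ρ t₀ x * u t₀ x ^ 2) * Real.exp (-2 * ∫ s in t₀..t₁, b s) := by
  refine le_of_tendsto (intervalIntegral_tendsto_integral hint₁
    (tendsto_neg_atTop_atBot.comp tendsto_natCast_atTop_atTop) tendsto_natCast_atTop_atTop)
    (Eventually.of_forall fun n => ?_)
  obtain ⟨a₁, a₂, heq⟩ := exists_integral_energy_eq hρ hu h hb hmass hburgers (-n) n
  rw [Function.comp_apply, heq]
  gcongr
  exact intervalIntegral_le_integral_of_nonneg hint₀
    (fun x => mul_nonneg (hρ₀ x) (sq_nonneg _)) a₁ a₂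

end Energy

theorem stmt_15_general (α T : ℝ) (y : ℝ → ℝ)
    (hy : ∀ t ∈ Icc (0:ℝ) T, HasDerivAt y (-(1/2) + (2/α) * (y t)^2) t)
    (hy0 : ∀ t ∈ Icc (0:ℝ) T, 0 ≤ y t)
    (ρ u : ℝ → ℝ → ℝ)
    (hρC1 : ContDiff ℝ 1 (fun p : ℝ × ℝ => ρ p.1 p.2))
    (huC1 : ContDiff ℝ 1 (fun p : ℝ × ℝ => u p.1 p.2))
    (hρpos : ∀ t x, 0 ≤ ρ t x)
    (hmass : ∀ t ∈ Icc (0:ℝ) T, ∀ x : ℝ,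
      deriv (fun s => ρ s x) t + deriv (fun x' => ρ t x' * u t x') x = 0)
    (hburgers : ∀ t ∈ Icc (0:ℝ) T, ∀ x : ℝ,
      deriv (fun s => u s x) t + u t x * deriv (fun x' => u t x') x
        + (2/α) * y t * u t x = 0)
    (hint : ∀ t ∈ Icc (0:ℝ) T, Integrable (fun x : ℝ => ρ t x * (u t x)^2)) :
    ∀ t ∈ Icc (0:ℝ) T,
      y t * ∫ x : ℝ, ρ t x * (u t x)^2 ≤
        (y 0 * ∫ x : ℝ, ρ 0 x * (u 0 x)^2) *
          Real.exp (-∫ s in (0:ℝ)..t, 2 * y s / α) := by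
  intro t ht
  have hsub : Icc 0 t ⊆ Icc 0 T := Icc_subset_Icc_right ht.2
  have hyc : ContinuousOn y (Icc 0 t) := fun s hs =>
    (hy s (hsub hs)).continuousAt.continuousWithinAt
  have hb : ContinuousOn (fun s => 2 * y s / α) (Icc 0 t) :=
    (continuousOn_const.mul hyc).div_const α
  have henergy := integral_energy_le hρC1 huC1 ht.1 hb
    (fun s hs => hmass s (hsub (Ioo_subset_Icc_self hs)))
    (fun s hs x => by linear_combination hburgers s (hsub (Ioo_subset_Icc_self hs)) x)
    (hρpos 0) (hint 0 (left_mem_Icc.2 (ht.1.trans ht.2))) (hint t ht)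
  have hriccati := le_mul_exp_integral_of_hasDerivAt ht.1 hb hyc
    (fun s hs => hy s (hsub (Ioo_subset_Icc_self hs))) fun s _ => by
      linarith [show 2 / α * y s ^ 2 = 2 * y s / α * y s by ring]
  have hI₀ : 0 ≤ ∫ x, ρ 0 x * u 0 x ^ 2 :=
    integral_nonneg fun x => mul_nonneg (hρpos 0 x) (sq_nonneg _)
  set B := ∫ s in (0:ℝ)..t, 2 * y s / α
  calc y t * ∫ x, ρ t x * u t x ^ 2
      ≤ y t * ((∫ x, ρ 0 x * u 0 x ^ 2) * Real.exp (-2 * B)) := by gcongr; exact hy0 t ht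
    _ ≤ y 0 * Real.exp B * ((∫ x, ρ 0 x * u 0 x ^ 2) * Real.exp (-2 * B)) := by gcongr
    _ = (y 0 * ∫ x, ρ 0 x * u 0 x ^ 2) * Real.exp (-B) := by
      rw [show -B = B + -2 * B by ring, Real.exp_add]
      ring

/-- Hydrodynamic Lyapunov decay: for `C¹` solutions `ρ ≥ 0`, `u` of the continuity
equation and the damped Burgers equation, with suitable decay and integrability, the
function `𝓛 t = y t ∫ ρ u²` satisfies `𝓛 t ≤ 𝓛 0 · exp(-∫₀ᵗ 2 y/α)` on `[0,T]`. -/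
theorem stmt_15 (α T : ℝ) (hα : 0 < α) (hT : 0 < T) (y : ℝ → ℝ)
    (hy : ∀ t ∈ Icc (0:ℝ) T, HasDerivAt y (-(1/2) + (2/α) * (y t)^2) t)
    (hyT : y T = 0) (hy0 : ∀ t ∈ Icc (0:ℝ) T, 0 ≤ y t)
    (ρ u : ℝ → ℝ → ℝ)
    (hρC1 : ContDiff ℝ 1 (fun p : ℝ × ℝ => ρ p.1 p.2))
    (huC1 : ContDiff ℝ 1 (fun p : ℝ × ℝ => u p.1 p.2))
    (hρpos : ∀ t x, 0 ≤ ρ t x)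
    (hdecay2 : ∀ t ∈ Icc (0:ℝ) T,
      Tendsto (fun x : ℝ => ρ t x * (u t x)^2) (cocompact ℝ) (nhds 0))
    (hdecay3 : ∀ t ∈ Icc (0:ℝ) T,
      Tendsto (fun x : ℝ => ρ t x * (u t x)^3) (cocompact ℝ) (nhds 0))
    (hmass : ∀ t ∈ Icc (0:ℝ) T, ∀ x : ℝ,
      deriv (fun s => ρ s x) t + deriv (fun x' => ρ t x' * u t x') x = 0)
    (hburgers : ∀ t ∈ Icc (0:ℝ) T, ∀ x : ℝ,
      deriv (fun s => u s x) t + u t x * deriv (fun x' => u t x') x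
        + (2/α) * y t * u t x = 0)
    (hint : ∀ t ∈ Icc (0:ℝ) T, Integrable (fun x : ℝ => ρ t x * (u t x)^2)) :
    ∀ t ∈ Icc (0:ℝ) T,
      y t * ∫ x : ℝ, ρ t x * (u t x)^2 ≤
        (y 0 * ∫ x : ℝ, ρ 0 x * (u 0 x)^2) *
          Real.exp (-∫ s in (0:ℝ)..t, 2 * y s / α) :=
  stmt_15_general α T y hy hy0 ρ u hρC1 huC1 hρpos hmass hburgers hint
end
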